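/- In the restricted two-valued class-segregated buffer model (one 1-queue and one α-queue, α > 1, both of capacity B), suppose the input sequence σ is one-phase, i.e., no packets arrive after the first time at which both of GREEDY's queues are empty. Then for every feasible diligent schedule OPT that accepts the same number of α-packets as GREEDY (A*_α = A_α), the number of 1-packets accepted by OPT satisfies A*_1 − A_1 ≤ A_1, i.e., A*_1 ≤ 2·A_1. -/
import Mathlib


/-!
Model of class-segregated buffer management (Al-Bawani, Souza).

A switch has `n` queues and `m` packet values `val : Fin m → ℝ`; queue `q` is
assigned value index `qval q` and has capacity `cap q`.  An input sequence is a
list of events: an `arrive q` event (a packet destined to queue `q`) or a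
`send` event.  A (diligent) schedule is given by its decisions at send events,
`dec : ℕ → Option (Fin n)` (decision for the `k`-th send event): acceptance is
forced (accept iff the destination queue is not full), at a send event the
schedule transmits one packet from the chosen non-empty queue, and it may
choose `none` only if all queues are empty.  `run` simulates the schedule,
tracking queue contents, the number of accepted packets of each value, and the
number of transmitted packets of each value.  `Feasible` expresses diligence,
and `GreedyFeasible` additionally requires that every transmitted packet has
the highest value among non-empty queues (ties broken arbitrarily).
`benefit` is the total value of transmitted packets.
-/

namespace BufferModel

inductive BEvent (n : ℕ) : Type where
  | arrive (q : Fin n) : BEvent n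
  | send : BEvent n
deriving DecidableEq

/-- `queue q` = number of packets currently in queue `q`; `acc i` = number of
packets of value index `i` accepted so far; `trans i` = number of packets of
value index `i` transmitted so far. -/
structure BState (n m : ℕ) where
  queue : Fin n → ℕ
  acc : Fin m → ℕ
  trans : Fin m → ℕ

def initState (n m : ℕ) : BState n m :=
  ⟨fun _ => 0, fun _ => 0, fun _ => 0⟩

/-- Diligent processing of an arrive event at queue `q`: accept iff there is room. -/
def arriveStep {n m : ℕ} (cap : Fin n → ℕ) (qval : Fin n → Fin m)
    (s : BState n m) (q : Fin n) : BState n m :=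
  if s.queue q < cap q then
    { queue := Function.update s.queue q (s.queue q + 1)
      acc := Function.update s.acc (qval q) (s.acc (qval q) + 1)
      trans := s.trans }
  else s

/-- Processing of a send event with decision `d`. -/
def sendStep {n m : ℕ} (qval : Fin n → Fin m) (s : BState n m)
    (d : Option (Fin n)) : BState n m :=
  match d with
  | some q =>
      if 0 < s.queue q then
        { queue := Function.update s.queue q (s.queue q - 1)
          acc := s.acc
          trans := Function.update s.trans (qval q) (s.trans (qval q) + 1) }
      else s
  | none => s

/-- Simulate the schedule with send-decisions `dec` on an event list, starting
with send-counter `k` and state `s`. -/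
def run {n m : ℕ} (cap : Fin n → ℕ) (qval : Fin n → Fin m)
    (dec : ℕ → Option (Fin n)) :
    List (BEvent n) → ℕ → BState n m → BState n m
  | [], _, s => s
  | BEvent.arrive q :: es, k, s => run cap qval dec es k (arriveStep cap qval s q)
  | BEvent.send :: es, k, s => run cap qval dec es (k + 1) (sendStep qval s (dec k))

/-- The schedule `dec` is feasible (diligent): at each send event it transmits
from a non-empty queue, and it stays idle only if all queues are empty. -/
def Feasible {n m : ℕ} (cap : Fin n → ℕ) (qval : Fin n → Fin m)
    (dec : ℕ → Option (Fin n)) :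
    List (BEvent n) → ℕ → BState n m → Prop
  | [], _, _ => True
  | BEvent.arrive q :: es, k, s => Feasible cap qval dec es k (arriveStep cap qval s q)
  | BEvent.send :: es, k, s =>
      (match dec k with
       | some q => 0 < s.queue q
       | none => ∀ q, s.queue q = 0) ∧
      Feasible cap qval dec es (k + 1) (sendStep qval s (dec k))

/-- The schedule `dec` is a GREEDY schedule: feasible, and at every send event
it transmits a packet from a non-empty queue of the highest value. -/
def GreedyFeasible {n m : ℕ} (val : Fin m → ℝ) (cap : Fin n → ℕ)
    (qval : Fin n → Fin m) (dec : ℕ → Option (Fin n)) :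
    List (BEvent n) → ℕ → BState n m → Prop
  | [], _, _ => True
  | BEvent.arrive q :: es, k, s =>
      GreedyFeasible val cap qval dec es k (arriveStep cap qval s q)
  | BEvent.send :: es, k, s =>
      (match dec k with
       | some q => 0 < s.queue q ∧
           ∀ q', 0 < s.queue q' → val (qval q') ≤ val (qval q)
       | none => ∀ q, s.queue q = 0) ∧
      GreedyFeasible val cap qval dec es (k + 1) (sendStep qval s (dec k))

/-- Benefit of a schedule: total value of the transmitted packets. -/
def benefit {n m : ℕ} (val : Fin m → ℝ) (s : BState n m) : ℝ :=
  ∑ i, val i * (s.trans i : ℝ)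

end BufferModel

namespace BufferModel

/-- The potential function used in the inductive invariant. -/
def Hpot (B gq0 gq1 dq0 dq1 : ℤ) : ℤ :=
  max 0 (2 * gq0 - (dq0 + dq1 - gq1) +
    min (max ((dq0 + dq1 - gq1) - gq0) 0) (B - gq0))

/-- The inductive invariant relating GREEDY's state `sg` and OPT's state `sd`. -/
def Inv (B : ℕ) (sg sd : BState 2 2) : Prop :=
  sg.queue 0 ≤ B ∧ sg.queue 1 ≤ B ∧ sd.queue 0 ≤ B ∧ sd.queue 1 ≤ B ∧
  sg.queue 1 ≤ sd.queue 1 ∧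
  (sd.acc 0 : ℤ) + (sd.acc 1 : ℤ) +
      Hpot (B : ℤ) (sg.queue 0 : ℤ) (sg.queue 1 : ℤ) (sd.queue 0 : ℤ) (sd.queue 1 : ℤ)
    ≤ 2 * (sg.acc 0 : ℤ) + (sg.acc 1 : ℤ)

lemma upd00 {β : Type} (f : Fin 2 → β) (v : β) :
    Function.update f 0 v 0 = v := Function.update_self 0 v f

lemma upd11 {β : Type} (f : Fin 2 → β) (v : β) :
    Function.update f 1 v 1 = v := Function.update_self 1 v f

lemma upd01 {β : Type} (f : Fin 2 → β) (v : β) :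
    Function.update f 0 v 1 = f 1 := Function.update_of_ne (by decide) v f

lemma upd10 {β : Type} (f : Fin 2 → β) (v : β) :
    Function.update f 1 v 0 = f 0 := Function.update_of_ne (by decide) v f

lemma inv_arrive (B : ℕ) (q : Fin 2) (sg sd : BState 2 2) (h : Inv B sg sd) :
    Inv B (arriveStep (fun _ => B) id sg q) (arriveStep (fun _ => B) id sd q) := by
  obtain ⟨h1, h2, h3, h4, h5, h6⟩ := h
  fin_cases q <;>
  · simp only [arriveStep, id_eq]
    split_ifs with hg hd hd <;>
    · refine ⟨?_, ?_, ?_, ?_, ?_, ?_⟩ <;>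
      · simp only [Hpot, upd00, upd11, upd01, upd10, Fin.zero_eta, Fin.mk_one,
          Fin.isValue] at *
        push_cast at h6 ⊢
        omega

lemma inv_send (B : ℕ) (gd dd : Option (Fin 2))
    (sg sd : BState 2 2)
    (hgfact : (gd = none ∧ sg.queue 0 = 0 ∧ sg.queue 1 = 0) ∨
      (gd = some 0 ∧ 0 < sg.queue 0 ∧ sg.queue 1 = 0) ∨
      (gd = some 1 ∧ 0 < sg.queue 1))
    (hdfact : (dd = none ∧ sd.queue 0 = 0 ∧ sd.queue 1 = 0) ∨
      (dd = some 0 ∧ 0 < sd.queue 0) ∨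
      (dd = some 1 ∧ 0 < sd.queue 1))
    (h : Inv B sg sd) :
    Inv B (sendStep id sg gd) (sendStep id sd dd) := by
  obtain ⟨h1, h2, h3, h4, h5, h6⟩ := h
  rcases hgfact with ⟨hgd, hg0, hg1⟩ | ⟨hgd, hg0, hg1⟩ | ⟨hgd, hg1⟩ <;>
    rcases hdfact with ⟨hdd, hd0, hd1⟩ | ⟨hdd, hd0⟩ | ⟨hdd, hd1⟩ <;>
      subst hgd <;> subst hdd <;>
  · simp only [sendStep, id_eq]
    first
      | (split_ifs <;>
         · refine ⟨?_, ?_, ?_, ?_, ?_, ?_⟩ <;>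
           · simp only [Hpot, upd00, upd11, upd01, upd10, Fin.zero_eta, Fin.mk_one,
               Fin.isValue] at *
             push_cast at h6 ⊢
             omega)
      | (refine ⟨?_, ?_, ?_, ?_, ?_, ?_⟩ <;>
         · simp only [Hpot, upd00, upd11, upd01, upd10, Fin.zero_eta, Fin.mk_one,
             Fin.isValue] at *
           push_cast at h6 ⊢
           omega)

lemma inv_run (B : ℕ) {α : ℝ} (hα : 1 < α) (g d : ℕ → Option (Fin 2)) :
    ∀ (σ : List (BEvent 2)) (k : ℕ) (sg sd : BState 2 2),
      GreedyFeasible ![1, α] (fun _ => B) id g σ k sg →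
      Feasible (fun _ => B) id d σ k sd →
      Inv B sg sd →
      Inv B (run (fun _ => B) id g σ k sg) (run (fun _ => B) id d σ k sd) := by
  intro σ
  induction σ with
  | nil => intro k sg sd _ _ h; exact h
  | cons e es ih =>
    intro k sg sd hg hd h
    cases e with
    | arrive q =>
      simp only [run, GreedyFeasible] at hg ⊢
      simp only [Feasible] at hd
      exact ih k _ _ hg hd (inv_arrive B q sg sd h)
    | send =>
      simp only [run, GreedyFeasible] at hg ⊢
      simp only [Feasible] at hd
      refine ih (k + 1) _ _ hg.2 hd.2 (inv_send B (g k) (d k) sg sd ?_ ?_ h)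
      · have hga := hg.1
        cases hgk : g k with
        | none =>
          rw [hgk] at hga
          exact Or.inl ⟨rfl, hga 0, hga 1⟩
        | some q =>
          rw [hgk] at hga
          fin_cases q
          · refine Or.inr (Or.inl ⟨rfl, hga.1, ?_⟩)
            by_contra hne
            have := hga.2 1 (Nat.pos_of_ne_zero hne)
            simp only [id_eq, Fin.zero_eta, Fin.mk_one, Fin.isValue,
              Matrix.cons_val_one, Matrix.head_cons,
              Matrix.cons_val_zero] at this
            linarith
          · exact Or.inr (Or.inr ⟨rfl, hga.1⟩)
      · have hda := hd.1
        cases hdk : d k with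
        | none =>
          rw [hdk] at hda
          exact Or.inl ⟨rfl, hda 0, hda 1⟩
        | some q =>
          rw [hdk] at hda
          fin_cases q
          · exact Or.inr (Or.inl ⟨rfl, hda⟩)
          · exact Or.inr (Or.inr ⟨rfl, hda⟩)

lemma inv_init (B : ℕ) : Inv B (initState 2 2) (initState 2 2) := by
  refine ⟨?_, ?_, ?_, ?_, ?_, ?_⟩ <;>
    simp [initState, Inv, Hpot] <;> omega

/-- In the restricted two-valued class-segregated buffer
model (one `1`-queue = queue `0`, one `α`-queue = queue `1`, `α > 1`, both of
capacity `B`), suppose the input sequence `σ` is one-phase: no packet arrives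
after the first send event at which both of GREEDY's queues become empty
(equivalently, after *any* send event leaving GREEDY's queues empty, only send
events remain).  Then for every feasible diligent schedule `d` (OPT) that
accepts the same number of `α`-packets as the GREEDY schedule `g`
(`A*_α = A_α`), OPT's number of accepted `1`-packets satisfies
`A*_1 − A_1 ≤ A_1`, i.e. `A*_1 ≤ 2·A_1`. -/
theorem one_phase_ones_at_most_doubled
    (α : ℝ) (hα : 1 < α) (B : ℕ)
    (σ : List (BEvent 2)) (g d : ℕ → Option (Fin 2))
    (hg : GreedyFeasible ![1, α] (fun _ => B) id g σ 0 (initState 2 2))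
    (hd : Feasible (fun _ => B) id d σ 0 (initState 2 2))
    (hphase : ∀ k, (hk : k < σ.length) → σ[k]'hk = BEvent.send →
      (∀ q, (run (fun _ => B) id g (σ.take (k + 1)) 0 (initState 2 2)).queue q = 0) →
      ∀ e ∈ σ.drop (k + 1), e = BEvent.send)
    (hacc : (run (fun _ => B) id d σ 0 (initState 2 2)).acc 1 =
      (run (fun _ => B) id g σ 0 (initState 2 2)).acc 1) :
    (run (fun _ => B) id d σ 0 (initState 2 2)).acc 0 ≤
      2 * (run (fun _ => B) id g σ 0 (initState 2 2)).acc 0 := by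
  have h := inv_run B hα g d σ 0 (initState 2 2) (initState 2 2) hg hd (inv_init B)
  have h6 := h.2.2.2.2.2
  simp only [Hpot] at h6
  omega

end BufferModel
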